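/- arXiv:1802.04984 — 2 statements merged into one kernel-verified Lean document; each statement's English description precedes it below -/
import Mathlib

section
/- If P : V → F_q is a polynomial of degree d such that r(Δ_t P) ≤ r for all t ∈ V, then ‖ψ(P)‖_{U_d}^{2^d} ≥ b(r, d−1)^{2^{d-1}} > 0, where b is the lower bound function for Gowers norms of bounded-rank polynomials of degree d−1. -/
open MvPolynomial

/-- Discrete (additive) difference: `(aDiff t f) x = f (x + t) - f x`. -/
def aDiff {V k : Type*} [Add V] [Sub k] (t : V) (f : V → k) : V → k :=
  fun x => f (x + t) - f x

/-- Iterated difference `Δ_{h m} ⋯ Δ_{h 1} f`. -/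
def iterDiff {V k : Type*} [Add V] [Sub k] {m : ℕ} (h : Fin m → V) (f : V → k) : V → k :=
  (List.ofFn h).foldl (fun g t => aDiff t g) f

/-- The shifted polynomial `x ↦ P (x + t)`. -/
noncomputable def pShift {k : Type*} [CommSemiring k] {n : ℕ} (t : Fin n → k)
    (P : MvPolynomial (Fin n) k) : MvPolynomial (Fin n) k :=
  bind₁ (fun i => X i + C (t i)) P

/-- The difference polynomial `Δ_t P = P(· + t) - P(·)`. -/
noncomputable def pDelta {k : Type*} [CommRing k] {n : ℕ} (t : Fin n → k)
    (P : MvPolynomial (Fin n) k) : MvPolynomial (Fin n) k :=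
  pShift t P - P

/-- Directional derivative `∂P/∂t = ∑ i, t i • ∂P/∂xᵢ`. -/
noncomputable def dirDeriv {k : Type*} [CommRing k] {n : ℕ} (t : Fin n → k)
    (P : MvPolynomial (Fin n) k) : MvPolynomial (Fin n) k :=
  ∑ i, t i • pderiv i P

/-- `Q` has (Schmidt/algebraic) rank at most `r`: over the algebraic closure it can be
written as a sum of `r` products of pairs of homogeneous polynomials of positive degree. -/
def HasRankLE {k : Type*} [Field k] {σ : Type*} (Q : MvPolynomial σ k) (r : ℕ) : Prop :=
  ∃ L R : Fin r → MvPolynomial σ (AlgebraicClosure k),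
    (∀ i, ∃ a, 0 < a ∧ (L i).IsHomogeneous a) ∧
    (∀ i, ∃ b, 0 < b ∧ (R i).IsHomogeneous b) ∧
    MvPolynomial.map (algebraMap k (AlgebraicClosure k)) Q = ∑ i, L i * R i

/-- The rank of the degree-`e` homogeneous part of `Q`. -/
noncomputable def rankAt {k : Type*} [Field k] {σ : Type*} (e : ℕ)
    (Q : MvPolynomial σ k) : ℕ :=
  sInf {r | HasRankLE (homogeneousComponent e Q) r}

/-- Multiplicative difference: `(mDiff t F) x = F (x + t) * conj (F x)`. -/
noncomputable def mDiff {V : Type*} [Add V] (t : V) (F : V → ℂ) : V → ℂ :=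
  fun x => F (x + t) * (starRingEnd ℂ) (F x)

/-- Iterated multiplicative difference `Δ'_{h m} ⋯ Δ'_{h 1} F`. -/
noncomputable def iterMDiff {V : Type*} [Add V] {m : ℕ} (h : Fin m → V) (F : V → ℂ) : V → ℂ :=
  (List.ofFn h).foldl (fun G t => mDiff t G) F

/-- The `2^m`-th power of the Gowers `U_m` norm:
`‖F‖_{U_m}^{2^m} = 𝔼_{x, h₁,…,h_m} Δ'_{h_m}⋯Δ'_{h₁} F (x)`. -/
noncomputable def UPow {V : Type*} [Add V] [Fintype V] (m : ℕ) (F : V → ℂ) : ℂ :=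
  (Fintype.card V : ℂ)⁻¹ ^ (m + 1) * ∑ x : V, ∑ h : Fin m → V, iterMDiff h F x


section Aux

/-! ### Auxiliary support/degree lemmas -/

variable {K : Type*} [CommRing K] {n : ℕ}

/-- `E` is supported strictly below the corner `s`. -/
def IsBelow (s : Fin n →₀ ℕ) (E : MvPolynomial (Fin n) K) : Prop :=
  ∀ u ∈ E.support, u ≤ s ∧ u ≠ s

lemma isBelow_zero (s : Fin n →₀ ℕ) : IsBelow s (0 : MvPolynomial (Fin n) K) := by
  intro u hu; simp at hu

lemma isBelow_add {s : Fin n →₀ ℕ} {E E' : MvPolynomial (Fin n) K}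
    (h : IsBelow s E) (h' : IsBelow s E') : IsBelow s (E + E') := by
  intro u hu
  rcases Finset.mem_union.1 (MvPolynomial.support_add hu) with h1 | h1
  · exact h u h1
  · exact h' u h1

lemma le_corner_eq {u₁ u₂ s s' : Fin n →₀ ℕ} (h1 : u₁ ≤ s) (h2 : u₂ ≤ s')
    (h : u₁ + u₂ = s + s') : u₁ = s ∧ u₂ = s' := by
  rw [Finsupp.le_def] at h1 h2
  constructor <;> ext i <;>
  · have := DFunLike.congr_fun h i
    simp only [Finsupp.add_apply] at this
    have := h1 i; have := h2 i; omega

lemma isBelow_mul {s s' : Fin n →₀ ℕ} {E E' : MvPolynomial (Fin n) K}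
    (h : IsBelow s E) (h' : IsBelow s' E') :
    IsBelow (s + s') (monomial s (1 : K) * E' + E * monomial s' 1 + E * E') := by
  have corner : ∀ {u₁ u₂ : Fin n →₀ ℕ}, u₁ ≤ s → u₂ ≤ s' → (u₁ ≠ s ∨ u₂ ≠ s') →
      u₁ + u₂ ≤ s + s' ∧ u₁ + u₂ ≠ s + s' := by
    intro u₁ u₂ h1 h2 hne
    refine ⟨add_le_add h1 h2, fun hc => ?_⟩
    rcases le_corner_eq h1 h2 hc with ⟨rfl, rfl⟩
    tauto
  apply isBelow_add (isBelow_add ?_ ?_) ?_ <;> intro u hu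
  · rcases Finset.mem_add.1 (MvPolynomial.support_mul _ _ hu) with ⟨a, ha, c, hc, rfl⟩
    have ha' : a = s := by
      have := MvPolynomial.support_monomial_subset ha; simpa using this
    subst ha'
    exact corner le_rfl (h' c hc).1 (Or.inr (h' c hc).2)
  · rcases Finset.mem_add.1 (MvPolynomial.support_mul _ _ hu) with ⟨a, ha, c, hc, rfl⟩
    have hc' : c = s' := by
      have := MvPolynomial.support_monomial_subset hc; simpa using this
    subst hc'
    exact corner (h a ha).1 le_rfl (Or.inl (h a ha).2)
  · rcases Finset.mem_add.1 (MvPolynomial.support_mul _ _ hu) with ⟨a, ha, c, hc, rfl⟩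
    exact corner (h a ha).1 (h' c hc).1 (Or.inl (h a ha).2)

lemma corner_decomp_mul {s s' : Fin n →₀ ℕ} {p q E E' : MvPolynomial (Fin n) K}
    (hp : p = monomial s 1 + E) (hq : q = monomial s' 1 + E')
    (h : IsBelow s E) (h' : IsBelow s' E') :
    ∃ E'', p * q = monomial (s + s') 1 + E'' ∧ IsBelow (s + s') E'' := by
  refine ⟨monomial s (1 : K) * E' + E * monomial s' 1 + E * E', ?_, isBelow_mul h h'⟩
  subst hp hq
  have : (monomial (s + s')) (1 : K) = monomial s 1 * monomial s' 1 := by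
    rw [monomial_mul, one_mul]
  rw [this]; ring

/-- binomial power decomposition -/
lemma pow_X_add_C_below (i : Fin n) (a : K) (m : ℕ) :
    ∃ E : MvPolynomial (Fin n) K, (X i + C a) ^ m = monomial (Finsupp.single i m) 1 + E ∧
      IsBelow (Finsupp.single i m) E := by
  induction m with
  | zero => exact ⟨0, by simp, isBelow_zero _⟩
  | succ m ih =>
    obtain ⟨E, hE, hEb⟩ := ih
    have hbase : (X i + C a : MvPolynomial (Fin n) K) = monomial (Finsupp.single i 1) 1 + C a := by
      rw [X]
    have hCa : IsBelow (Finsupp.single i 1) (C a : MvPolynomial (Fin n) K) := by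
      intro u hu
      have hu0 : u = 0 := by
        rw [← MvPolynomial.monomial_zero'] at hu
        have := MvPolynomial.support_monomial_subset hu
        simpa using this
      subst hu0
      refine ⟨Finsupp.le_def.2 fun j => Nat.zero_le _, fun hc => ?_⟩
      have := Finsupp.single_eq_zero.1 hc.symm
      exact one_ne_zero this
    obtain ⟨E'', hE'', hb⟩ := corner_decomp_mul hbase hE hCa hEb
    rw [← Finsupp.single_add, add_comm 1 m] at hE'' hb
    exact ⟨E'', by rw [pow_succ', hE''], hb⟩

lemma pShift_monomial_below (t : Fin n → K) (s : Fin n →₀ ℕ) (c : K) :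
    ∃ E : MvPolynomial (Fin n) K, pShift t (monomial s c) = monomial s c + E ∧ IsBelow s E := by
  have key : ∀ S : Finset (Fin n), ∃ E : MvPolynomial (Fin n) K,
      (∏ j ∈ S, (X j + C (t j)) ^ (s j)) =
        monomial (∑ j ∈ S, Finsupp.single j (s j)) 1 + E ∧
      IsBelow (∑ j ∈ S, Finsupp.single j (s j)) E := by
    intro S
    induction S using Finset.induction with
    | empty => exact ⟨0, by simp, isBelow_zero _⟩
    | @insert j S' hj ih =>
      obtain ⟨E, hE, hEb⟩ := ih
      obtain ⟨E₁, hE₁, hE₁b⟩ := pow_X_add_C_below j (t j) (s j)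
      obtain ⟨E'', hE'', hb⟩ := corner_decomp_mul hE₁ hE hE₁b hEb
      rw [Finset.prod_insert hj, Finset.sum_insert hj]
      exact ⟨E'', by rw [hE''], hb⟩
  obtain ⟨E, hE, hEb⟩ := key s.support
  have hsum : (∑ j ∈ s.support, Finsupp.single j (s j)) = s := Finsupp.sum_single s
  rw [hsum] at hE hEb
  refine ⟨C c * E, ?_, ?_⟩
  · rw [pShift, bind₁_monomial, hE, mul_add, C_mul_monomial, mul_one]
  · intro u hu
    have : u ∈ E.support := by
      have h1 : C c * E = c • E := by rw [MvPolynomial.smul_eq_C_mul]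
      rw [h1] at hu
      exact MvPolynomial.support_smul hu
    exact hEb u this

lemma degree_lt_of_le_ne {u s : Fin n →₀ ℕ} (h : u ≤ s) (hne : u ≠ s) :
    (u.sum fun _ e => e) < s.sum fun _ e => e := by
  rw [Finsupp.sum_fintype _ _ (fun _ => rfl), Finsupp.sum_fintype _ _ (fun _ => rfl)]
  have hle := Finsupp.le_def.1 h
  obtain ⟨i, hi⟩ : ∃ i, u i ≠ s i := by
    by_contra hc
    push_neg at hc
    exact hne (Finsupp.ext hc)
  exact Finset.sum_lt_sum (fun j _ => hle j) ⟨i, Finset.mem_univ i, lt_of_le_of_ne (hle i) hi⟩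

/-- The difference polynomial drops degree. -/
lemma totalDegree_pDelta_le {d : ℕ} (hd : 1 ≤ d) (t : Fin n → K)
    (P : MvPolynomial (Fin n) K) (hP : P.totalDegree ≤ d) :
    (pDelta t P).totalDegree ≤ d - 1 := by
  choose E hEeq hEb using fun s => pShift_monomial_below t s (coeff s P)
  have h0 : pShift t P = ∑ s ∈ P.support, (monomial s (coeff s P) + E s) := by
    conv_lhs => rw [MvPolynomial.as_sum P]
    simp only [pShift]
    rw [map_sum]
    exact Finset.sum_congr rfl fun s _ => hEeq s
  have hdecomp2 : pDelta t P = ∑ s ∈ P.support, E s := by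
    rw [pDelta, h0, Finset.sum_add_distrib, ← MvPolynomial.as_sum, add_sub_cancel_left]
  rw [hdecomp2]
  apply Finset.sup_le
  intro u hu
  have := MvPolynomial.support_sum hu
  rcases Finset.mem_biUnion.1 this with ⟨s, hs, huE⟩
  have h1 := (hEb s) u huE
  have h2 : (s.sum fun _ e => e) ≤ d := le_trans (MvPolynomial.le_totalDegree hs) hP
  have h3 := degree_lt_of_le_ne h1.1 h1.2
  omega

lemma eval_pShift (t x : Fin n → K) (P : MvPolynomial (Fin n) K) :
    eval x (pShift t P) = eval (x + t) P := by
  rw [pShift, eval, eval₂Hom_bind₁]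
  simp
  rfl

end Aux

section AuxField

/-- A constant of bounded rank is zero. -/
lemma eq_zero_of_hasRankLE_C {K : Type*} [Field K] {σ : Type*} {c : K} {r : ℕ}
    (h : HasRankLE (C c : MvPolynomial σ K) r) : c = 0 := by
  obtain ⟨L, R, hL, hR, heq⟩ := h
  have h0 := congrArg MvPolynomial.constantCoeff heq
  rw [MvPolynomial.map_C, MvPolynomial.constantCoeff_C, map_sum] at h0
  have hz : ∀ i, MvPolynomial.constantCoeff (L i * R i) = 0 := by
    intro i
    obtain ⟨a, ha, hhom⟩ := hL i
    rw [map_mul]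
    have : MvPolynomial.constantCoeff (L i) = 0 := by
      rw [MvPolynomial.constantCoeff_eq]
      exact hhom.coeff_eq_zero (by simpa using ha.ne)
    rw [this, zero_mul]
  rw [Finset.sum_congr rfl (fun i _ => hz i), Finset.sum_const, smul_zero] at h0
  exact (algebraMap K (AlgebraicClosure K)).injective (by simpa using h0)

end AuxField

section AuxGowers

variable {V : Type*} [AddCommGroup V] [Fintype V]

omit [Fintype V] in
lemma iterMDiff_cons {m : ℕ} (t : V) (h : Fin m → V) (F : V → ℂ) :
    iterMDiff (Fin.cons t h) F = iterMDiff h (mDiff t F) := by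
  simp [iterMDiff, List.ofFn_succ]

omit [Fintype V] in
lemma iterMDiff_snoc {m : ℕ} (h : Fin m → V) (t : V) (F : V → ℂ) :
    iterMDiff (Fin.snoc h t) F = mDiff t (iterMDiff h F) := by
  have h1 : List.ofFn (Fin.snoc h t : Fin (m+1) → V) = (List.ofFn h).concat t := by
    rw [List.ofFn_succ']
    simp
  simp only [iterMDiff, h1, List.concat_eq_append, List.foldl_concat]

lemma UPow_succ (m : ℕ) (F : V → ℂ) :
    UPow (m + 1) F = (Fintype.card V : ℂ)⁻¹ * ∑ t : V, UPow m (mDiff t F) := by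
  simp only [UPow]
  have hsum : ∀ x : V, ∑ h : Fin (m+1) → V, iterMDiff h F x
      = ∑ t : V, ∑ h : Fin m → V, iterMDiff h (mDiff t F) x := by
    intro x
    rw [← (Fin.consEquiv (fun _ => V)).sum_comp (fun h => iterMDiff h F x)]
    rw [Fintype.sum_prod_type]
    refine Finset.sum_congr rfl fun t _ => Finset.sum_congr rfl fun h _ => ?_
    simp only [Fin.consEquiv, Equiv.coe_fn_mk]
    rw [iterMDiff_cons]
  rw [Finset.sum_congr rfl (fun x _ => hsum x), Finset.sum_comm, Finset.mul_sum,
    Finset.mul_sum]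
  refine Finset.sum_congr rfl fun t _ => ?_
  ring

lemma UPow_nonneg_real (m : ℕ) (F : V → ℂ) :
    ∃ c : ℝ, 0 ≤ c ∧ UPow (m + 1) F = (c : ℂ) := by
  have key : ∑ x : V, ∑ h : Fin (m+1) → V, iterMDiff h F x
      = ∑ h : Fin m → V, (Complex.normSq (∑ x : V, iterMDiff h F x) : ℂ) := by
    rw [Finset.sum_comm]
    rw [← (Fin.snocEquiv (fun _ => V)).sum_comp
      (fun h => ∑ x : V, iterMDiff h F x)]
    rw [Fintype.sum_prod_type]
    rw [Finset.sum_comm]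
    refine Finset.sum_congr rfl fun h _ => ?_
    have hterm : ∀ t : V, ∑ x : V, iterMDiff (Fin.snocEquiv (fun _ => V) (t, h)) F x
        = ∑ x : V, iterMDiff h F (x + t) * (starRingEnd ℂ) (iterMDiff h F x) := by
      intro t
      refine Finset.sum_congr rfl fun x _ => ?_
      simp only [Fin.snocEquiv, Equiv.coe_fn_mk]
      rw [iterMDiff_snoc]
      rfl
    simp_rw [hterm]
    rw [Finset.sum_comm]
    have : ∀ x : V, ∑ t : V, iterMDiff h F (x + t) * (starRingEnd ℂ) (iterMDiff h F x)
        = (∑ y : V, iterMDiff h F y) * (starRingEnd ℂ) (iterMDiff h F x) := by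
      intro x
      rw [← Finset.sum_mul]
      congr 1
      exact Fintype.sum_equiv (Equiv.addLeft x) _ _ (fun t => rfl)
    simp_rw [this]
    rw [← Finset.mul_sum, ← map_sum, Complex.mul_conj]
  refine ⟨(Fintype.card V : ℝ)⁻¹ ^ (m + 2) * ∑ h : Fin m → V,
    Complex.normSq (∑ x : V, iterMDiff h F x), ?_, ?_⟩
  · exact mul_nonneg (pow_nonneg (inv_nonneg.2 (Nat.cast_nonneg _)) _)
      (Finset.sum_nonneg fun h _ => Complex.normSq_nonneg _)
  · rw [UPow, key]
    push_cast
    ring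

end AuxGowers

/-- assuming the lemma that every polynomial `Q` of degree `≤ d-1` and rank
`≤ r` satisfies `‖ψ(Q)‖_{U_{d-1}} ≥ b`, a polynomial `P` of degree `≤ d` with `r(Δ_t P) ≤ r`
for all `t` satisfies `‖ψ(P)‖_{U_d}^{2^d} ≥ b^{2^{d-1}} > 0`. -/
theorem stmt_10 {K : Type*} [Field K] [Fintype K] {d n r : ℕ} (hd : 1 ≤ d)
    (hchar : d < ringChar K) (ψ : AddChar K ℂ) (hψ : ∃ a, ψ a ≠ 1)
    (b : ℝ) (hb : 0 < b)
    (hlem : ∀ Q : MvPolynomial (Fin n) K, Q.totalDegree ≤ d - 1 →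
      HasRankLE (homogeneousComponent (d - 1) Q) r →
      b ^ 2 ^ (d - 1) ≤ ‖UPow (d - 1) (fun x => ψ (eval x Q))‖)
    (P : MvPolynomial (Fin n) K) (hP : P.totalDegree ≤ d)
    (hΔ : ∀ t : Fin n → K, HasRankLE (homogeneousComponent (d - 1) (pDelta t P)) r) :
    b ^ 2 ^ (d - 1) ≤ ‖UPow d (fun x => ψ (eval x P))‖ ∧
      (0 : ℝ) < b ^ 2 ^ (d - 1) := by
  have hBpos : (0:ℝ) < b ^ 2 ^ (d - 1) := pow_pos hb _
  refine ⟨?_, hBpos⟩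
  obtain ⟨m, rfl⟩ : ∃ m, d = m + 1 := ⟨d - 1, (Nat.succ_pred_eq_of_pos hd).symm⟩
  simp only [Nat.add_sub_cancel] at hlem hΔ ⊢
  set F : (Fin n → K) → ℂ := fun x => ψ (eval x P) with hF
  have hkey : ∀ t : Fin n → K, mDiff t F = fun x => ψ (eval x (pDelta t P)) := by
    intro t; funext x
    simp only [mDiff, hF]
    have hrhs : ψ (eval x (pDelta t P))
        = ψ (eval (x + t) P) * (starRingEnd ℂ) (ψ (eval x P)) := by
      rw [pDelta, map_sub, eval_pShift, sub_eq_add_neg, AddChar.map_add_eq_mul,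
        AddChar.map_neg_eq_inv, AddChar.inv_apply_eq_conj]
    rw [hrhs]
  have hdeg : ∀ t : Fin n → K, (pDelta t P).totalDegree ≤ m := by
    intro t
    have := totalDegree_pDelta_le (d := m + 1) (by omega) t P hP
    simpa using this
  have hlow : ∀ t : Fin n → K, b ^ 2 ^ m ≤ ‖UPow m (mDiff t F)‖ := by
    intro t
    rw [hkey t]
    exact hlem (pDelta t P) (hdeg t) (hΔ t)
  have hreal : ∀ t : Fin n → K, ∃ c : ℝ, 0 ≤ c ∧ UPow m (mDiff t F) = (c : ℂ) := by
    intro t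
    cases m with
    | zero =>
      have h0 : (pDelta t P).totalDegree = 0 := Nat.le_zero.1 (hdeg t)
      have hQ : pDelta t P = homogeneousComponent 0 (pDelta t P) := by
        conv_lhs => rw [← sum_homogeneousComponent (pDelta t P)]
        rw [h0]
        simp
      have hC : homogeneousComponent 0 (pDelta t P) = C (coeff 0 (pDelta t P)) :=
        homogeneousComponent_zero _
      have hc0 : coeff 0 (pDelta t P) = 0 := by
        have hr := hΔ t
        rw [hC] at hr
        exact eq_zero_of_hasRankLE_C hr
      have hQ0 : pDelta t P = 0 := by
        rw [hQ, hC, hc0, map_zero]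
      refine ⟨1, zero_le_one, ?_⟩
      rw [hkey t, hQ0]
      have hcard : (Fintype.card (Fin n → K) : ℂ) ≠ 0 := by
        exact_mod_cast Fintype.card_ne_zero
      simp [UPow, iterMDiff, hcard]
    | succ k => exact UPow_nonneg_real k (mDiff t F)
  choose c hc0 hcEq using hreal
  have hcB : ∀ t : Fin n → K, b ^ 2 ^ m ≤ c t := by
    intro t
    have := hlow t
    rw [hcEq t, Complex.norm_real, Real.norm_of_nonneg (hc0 t)] at this
    exact this
  rw [UPow_succ m F, Finset.sum_congr rfl (fun t _ => hcEq t)]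
  have hN : (0:ℝ) < (Fintype.card (Fin n → K) : ℝ) := by
    exact_mod_cast Fintype.card_pos
  have hcast : (Fintype.card (Fin n → K) : ℂ)⁻¹ * (∑ t : Fin n → K, ((c t : ℝ) : ℂ))
      = (((Fintype.card (Fin n → K) : ℝ))⁻¹ * ∑ t : Fin n → K, c t : ℝ) := by
    push_cast
    ring
  rw [hcast, Complex.norm_real,
    Real.norm_of_nonneg (mul_nonneg (inv_nonneg.2 hN.le) (Finset.sum_nonneg fun t _ => hc0 t))]
  have hsum : (Fintype.card (Fin n → K) : ℝ) * (b ^ 2 ^ m) ≤ ∑ t : Fin n → K, c t := by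
    calc (Fintype.card (Fin n → K) : ℝ) * (b ^ 2 ^ m)
        = ∑ _t : Fin n → K, b ^ 2 ^ m := by
          rw [Finset.sum_const, Finset.card_univ, nsmul_eq_mul]
      _ ≤ ∑ t : Fin n → K, c t := Finset.sum_le_sum fun t _ => hcB t
  calc b ^ 2 ^ m
      = (Fintype.card (Fin n → K) : ℝ)⁻¹ * ((Fintype.card (Fin n → K) : ℝ) * b ^ 2 ^ m) := by
        field_simp
    _ ≤ (Fintype.card (Fin n → K) : ℝ)⁻¹ * ∑ t : Fin n → K, c t :=
        mul_le_mul_of_nonneg_left hsum (inv_nonneg.2 hN.le)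
end

section
/- Let Z ⊆ A^n be a constructible set defined over ℤ by polynomial equations A_s = 0 (s ∈ S) and inequations B_t ≠ 0 (t ∈ T) with integer coefficients. If Z(F_q) = ∅ for all prime powers q = p^l with p ≥ d, then Z(k) = ∅ for every field k of characteristic 0 and every field k of characteristic ≥ d. -/
open MvPolynomial

instance : IsJacobsonRing ℤ := by
  rw [isJacobsonRing_iff_prime_eq]
  intro P hP
  by_cases hbot : P = ⊥
  · subst hbot
    refine eq_bot_iff.mpr fun x hx => ?_
    rw [Ideal.mem_jacobson_bot] at hx
    have h1 := Int.isUnit_iff.mp (hx 1)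
    have h2 := Int.isUnit_iff.mp (hx (-1))
    simp only [Ideal.mem_bot]
    omega
  · exact Ideal.jacobson_eq_self_of_isMaximal (H := IsPrime.to_maximal_ideal hbot)


/-- A field finitely generated as a `ℤ`-algebra is finite. -/
lemma finite_of_fieldFiniteTypeInt (K : Type) [Field K] [Algebra.FiniteType ℤ K] :
    Finite K := by
  have hfin : Module.Finite ℤ K := finite_of_finite_type_of_isJacobsonRing ℤ K
  have hint : Algebra.IsIntegral ℤ K := Algebra.IsIntegral.of_finite ℤ K
  have hp : ringChar K ≠ 0 := by
    intro h0
    haveI : CharP K 0 := h0 ▸ ringChar.charP K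
    haveI : CharZero K := CharP.charP_to_charZero K
    have h2 : IsIntegral ℤ ((IsScalarTower.toAlgHom ℤ ℚ K) (2⁻¹ : ℚ)) := hint.isIntegral _
    rw [isIntegral_algHom_iff (IsScalarTower.toAlgHom ℤ ℚ K)
      (algebraMap ℚ K).injective] at h2
    obtain ⟨y, hy⟩ := IsIntegrallyClosed.isIntegral_iff.mp h2
    have : (y : ℚ) * 2 = 1 := by
      rw [show ((y : ℚ)) = algebraMap ℤ ℚ y from rfl, hy]; norm_num
    have : (y * 2 : ℤ) = 1 := by exact_mod_cast this
    omega
  haveI : NeZero (ringChar K) := ⟨hp⟩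
  haveI : CharP K (ringChar K) := ringChar.charP K
  letI : Algebra (ZMod (ringChar K)) K := ZMod.algebra K (ringChar K)
  haveI : Module.Finite (ZMod (ringChar K)) K :=
    Module.Finite.of_restrictScalars_finite ℤ (ZMod (ringChar K)) K
  exact Module.finite_of_finite (ZMod (ringChar K))

/-- if a constructible set over `ℤ`, given by equations `A_s = 0` and
inequations `B_t ≠ 0`, has no points over any finite field of characteristic `≥ d`, then it
has no points over any field of characteristic `0` or `≥ d`. -/
theorem stmt_13 {n : ℕ} {S T : Type} [Fintype S] [Fintype T] (d : ℕ)
    (A : S → MvPolynomial (Fin n) ℤ) (B : T → MvPolynomial (Fin n) ℤ)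
    (hfin : ∀ (K : Type) [Field K] [Fintype K], d ≤ ringChar K →
      ¬ ∃ x : Fin n → K, (∀ s, aeval x (A s) = 0) ∧ (∀ t, aeval x (B t) ≠ 0))
    (k : Type*) [Field k] (hk : ringChar k = 0 ∨ d ≤ ringChar k) :
    ¬ ∃ x : Fin n → k, (∀ s, aeval x (A s) = 0) ∧ (∀ t, aeval x (B t) ≠ 0) := by
  rintro ⟨x, hA, hB⟩
  classical
  set N : ℕ := (d - 1).factorial with hN
  -- `N` is nonzero in `k`
  haveI : CharP k (ringChar k) := ringChar.charP k
  have hNk : ((N : ℤ) : k) ≠ 0 := by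
    push_cast
    intro h
    have hdvd := (CharP.cast_eq_zero_iff k (ringChar k) N).mp h
    rcases CharP.char_is_prime_or_zero k (ringChar k) with hpr | h0
    · have hle := (Nat.Prime.dvd_factorial hpr).mp hdvd
      have h2 := hpr.two_le
      rcases hk with h0' | hd <;> omega
    · rw [h0, zero_dvd_iff] at hdvd
      exact (Nat.factorial_ne_zero _) hdvd
  set Bp : MvPolynomial (Fin n) ℤ := ∏ t, B t with hBp
  have hBk : aeval x Bp ≠ 0 := by
    rw [hBp, map_prod]
    exact Finset.prod_ne_zero_iff.mpr fun t _ => hB t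
  -- the evaluation map
  set y : (Fin n ⊕ Fin 2) → k :=
    Sum.elim x ![(aeval x Bp)⁻¹, (((N : ℤ) : k))⁻¹] with hy
  set φ : MvPolynomial (Fin n ⊕ Fin 2) ℤ →ₐ[ℤ] k := aeval y with hφ
  set I : Ideal (MvPolynomial (Fin n ⊕ Fin 2) ℤ) := RingHom.ker φ.toRingHom with hI
  have hItop : I ≠ ⊤ := by
    intro htop
    have h1 : (1 : MvPolynomial (Fin n ⊕ Fin 2) ℤ) ∈ I := htop ▸ Submodule.mem_top
    rw [hI, RingHom.mem_ker] at h1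
    simp at h1
  obtain ⟨M, hM, hIM⟩ := Ideal.exists_le_maximal I hItop
  set K := MvPolynomial (Fin n ⊕ Fin 2) ℤ ⧸ M with hK
  letI : Field K := Ideal.Quotient.field M
  set π : MvPolynomial (Fin n ⊕ Fin 2) ℤ →ₐ[ℤ] K := Ideal.Quotient.mkₐ ℤ M with hπdef
  have hπ0 : ∀ q, φ q = 0 → π q = 0 := by
    intro q hq
    have : q ∈ M := hIM (by rwa [hI, RingHom.mem_ker])
    exact (Ideal.Quotient.eq_zero_iff_mem).mpr this
  haveI : Algebra.FiniteType ℤ K :=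
    Algebra.FiniteType.of_surjective (Ideal.Quotient.mkₐ ℤ M)
      (Ideal.Quotient.mkₐ_surjective ℤ M)
  haveI : Finite K := @finite_of_fieldFiniteTypeInt K _ (by
    convert this
    · rfl
    · exact Subsingleton.elim _ _)
  letI : Fintype K := Fintype.ofFinite K
  set xK : Fin n → K := fun i => π (X (Sum.inl i)) with hxK
  have key : ∀ q : MvPolynomial (Fin n) ℤ, aeval xK q = π (rename Sum.inl q) := by
    intro q
    conv_rhs => rw [MvPolynomial.aeval_unique π]
    rw [aeval_rename]
    rfl
  have keyφ : ∀ q : MvPolynomial (Fin n) ℤ, φ (rename Sum.inl q) = aeval x q := by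
    intro q
    rw [hφ, aeval_rename]
    rfl
  -- equations hold
  have hAK : ∀ s, aeval xK (A s) = 0 := by
    intro s
    rw [key]
    exact hπ0 _ (by rw [keyφ]; exact hA s)
  -- product of `B` is nonzero
  have hBK : aeval xK Bp ≠ 0 := by
    have hu : φ (X (Sum.inr 0) * rename Sum.inl Bp - 1) = 0 := by
      rw [map_sub, map_mul, map_one, keyφ]
      have : φ (X (Sum.inr 0)) = (aeval x Bp)⁻¹ := by
        rw [hφ, aeval_X, hy]
        simp
      rw [this, inv_mul_cancel₀ hBk, sub_self]
    have := hπ0 _ hu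
    rw [map_sub, map_mul, map_one, sub_eq_zero] at this
    intro h0
    rw [key] at h0
    rw [h0, mul_zero] at this
    exact one_ne_zero this.symm
  have hBKt : ∀ t, aeval xK (B t) ≠ 0 := by
    intro t h0
    apply hBK
    rw [hBp, map_prod]
    exact Finset.prod_eq_zero (Finset.mem_univ t) h0
  -- N is nonzero in K
  have hNK : ((N : ℤ) : K) ≠ 0 := by
    have hu : φ (X (Sum.inr 1) * C ((N : ℤ)) - 1) = 0 := by
      rw [map_sub, map_mul, map_one]
      have h1 : φ (X (Sum.inr 1)) = (((N : ℤ) : k))⁻¹ := by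
        rw [hφ, aeval_X, hy]
        simp
      have h2 : φ (C ((N : ℤ))) = ((N : ℤ) : k) := by
        simp [hφ]
      rw [h1, h2, inv_mul_cancel₀ hNk, sub_self]
    have := hπ0 _ hu
    rw [map_sub, map_mul, map_one, sub_eq_zero] at this
    intro h0
    have h2 : π (C ((N : ℤ))) = ((N : ℤ) : K) := by simp [hπdef]
    rw [h2, h0, mul_zero] at this
    exact one_ne_zero this.symm
  -- characteristic of K is at least d
  haveI : CharP K (ringChar K) := ringChar.charP K
  have hd : d ≤ ringChar K := by
    have hne := CharP.char_ne_zero_of_finite K (ringChar K)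
    rcases CharP.char_is_prime_or_zero K (ringChar K) with hpr | h0
    · by_contra hlt
      push_neg at hlt
      have hle : ringChar K ≤ d - 1 := by
        have h2 := hpr.two_le
        omega
      apply hNK
      push_cast
      rw [CharP.cast_eq_zero_iff K (ringChar K) N]
      exact (Nat.Prime.dvd_factorial hpr).mpr hle
    · exact absurd h0 hne
  exact hfin K hd ⟨xK, hAK, hBKt⟩
end
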